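/- Let n ≥ 2 and let H_n be the antiregular graph on n vertices with adjacency matrix A_n. Then every eigenvalue λ of A_n with λ < −1 satisfies λ < (−1−√2)/2, and every eigenvalue λ of A_n with λ > 0 satisfies λ > (−1+√2)/2. Equivalently, the closed interval [(−1−√2)/2, (−1+√2)/2] contains no eigenvalue of A_n other than possibly 0 and −1. -/

import Mathlib

open Matrix BigOperators
open scoped Classical

/-!
Let `v` be an eigenvector of `A_n` for an eigenvalue `λ ∉ {0, -1}` with `4λ² + 4λ ≤ 1`. In both
parities `H_n` is `C(α)` with `2k` cells, all singletons except cell `1` (0-indexed) of size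
`d ∈ {1, 2}`, and a vertex of cell `j` is adjacent exactly to the cells `i ≠ j` with `max i j` odd.
Writing `c j` for the sum of `v` over cell `j` and `A t = ∑_{s ≥ t} c (2s+1)`, the eigen-equations
become
`q (A t + A (t+2)) = (2q - 1) A (t+1)` for `t ≥ 1`, with `q = λ² + λ ∈ [-1/4, 1/4] \ {0}` and
`A k = 0`. As `|2q - 1| ≥ 2|q|`, `|A t|` is nonincreasing for `t ≥ 1`. The two boundary equations
combine to `P A 2 = N A 1` with `|P| < |N|` whenever `4λ² + 4λ ≤ 1`, so `A 1 = 0`; hence `A = 0`,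
`c = 0` and `v = 0`.
-/

/-- The equivalence splitting off the last cell of `Σ j : Fin (m+1), Fin (α j)`. -/
def splitLast (α : ℕ → ℕ) (m : ℕ) :
    (Σ j : Fin (m + 1), Fin (α j.val)) ≃ (Σ j : Fin m, Fin (α j.val)) ⊕ Fin (α m) where
  toFun x :=
    if h : x.1.val < m then Sum.inl ⟨⟨x.1.val, h⟩, x.2⟩
    else Sum.inr (Fin.cast (congrArg α
      (Nat.le_antisymm (Nat.lt_succ_iff.mp x.1.isLt) (Nat.le_of_not_lt h))) x.2)
  invFun x :=
    match x with
    | Sum.inl y => ⟨⟨y.1.val, Nat.lt_succ_of_lt y.1.isLt⟩, y.2⟩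
    | Sum.inr a => ⟨⟨m, Nat.lt_succ_self m⟩, a⟩
  left_inv := by
    rintro ⟨⟨jv, hj⟩, a⟩
    by_cases h : jv < m
    · simp [h]
    · have hm : jv = m := Nat.le_antisymm (Nat.lt_succ_iff.mp hj) (Nat.le_of_not_lt h)
      subst hm
      simp [h, Fin.cast]
  right_inv := by
    rintro (⟨⟨jv, hj⟩, a⟩ | a)
    · simp [hj]
    · simp [Fin.cast]

/-- The cograph `C(α 0, α 1, …, α (m-1))` (1-indexed in the paper: `C(α_1,…,α_m)`),
defined recursively: `C(α_1)` is the complement of the complete graph `K_{α_1}`, and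
`C(α_1,…,α_i)` is the complement of the disjoint union of `C(α_1,…,α_{i-1})` and `K_{α_i}`.
The vertices added at step `j` (the cell `C_j`) are the pairs `⟨j, a⟩`. -/
def cographC (α : ℕ → ℕ) : (m : ℕ) → SimpleGraph (Σ j : Fin m, Fin (α j.val))
  | 0 => ⊥
  | m + 1 =>
      SimpleGraph.comap (splitLast α m)
        ((cographC α m ⊕g (⊤ : SimpleGraph (Fin (α m))))ᶜ)

/-- The real adjacency matrix of a finite simple graph. -/
noncomputable def adjMat {V : Type*} [Fintype V] (G : SimpleGraph V) : Matrix V V ℝ :=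
  Matrix.of fun u v => if G.Adj u v then (1 : ℝ) else 0


open Finset

section CographAdjacency

variable (α : ℕ → ℕ) (m : ℕ)

@[simp] lemma splitLast_castSucc (i : Fin m) (a : Fin (α i)) :
    splitLast α m ⟨i.castSucc, a⟩ = Sum.inl ⟨i, a⟩ := by
  simp [splitLast]

@[simp] lemma splitLast_last (a : Fin (α m)) :
    splitLast α m ⟨Fin.last m, a⟩ = Sum.inr a := by
  simp [splitLast]

lemma cographC_succ_adj (x y : Σ j : Fin (m + 1), Fin (α j)) :
    (cographC α (m + 1)).Adj x y ↔
      x ≠ y ∧ ¬(cographC α m ⊕g ⊤).Adj (splitLast α m x) (splitLast α m y) := by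
  simp [cographC, (splitLast α m).injective.ne_iff]

lemma cographC_adj (x y : Σ j : Fin m, Fin (α j)) :
    (cographC α m).Adj x y ↔ x ≠ y ∧
      if x.1 = y.1 then (m + x.1) % 2 = 0 else (m + max (x.1 : ℕ) y.1) % 2 = 1 := by
  induction m with
  | zero => exact x.1.elim0
  | succ m ih =>
    obtain ⟨i, a⟩ := x
    obtain ⟨i', a'⟩ := y
    rw [cographC_succ_adj]
    induction i using Fin.lastCases with
    | last =>
      induction i' using Fin.lastCases with
      | last =>
        simp only [ne_eq, Sigma.mk.injEq, Fin.val_last, heq_eq_eq, true_and, splitLast_last,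
          SimpleGraph.sum_adj, SimpleGraph.top_adj, Decidable.not_not, not_and_self, ↓reduceIte,
          false_iff, not_and, Nat.mod_two_not_eq_zero]
        omega
      | cast i' =>
        simp only [ne_eq, Sigma.mk.injEq, Fin.ext_iff, Fin.val_last, Fin.val_castSucc,
          i'.isLt.ne', false_and, not_false_eq_true, splitLast_last, splitLast_castSucc,
          SimpleGraph.sum_adj, and_self, ↓reduceIte, Fin.is_le', sup_of_le_left, true_and, true_iff]
        omega
    | cast i =>
      induction i' using Fin.lastCases with
      | last =>
        simp only [ne_eq, Sigma.mk.injEq, Fin.ext_iff, Fin.val_castSucc, Fin.val_last, i.isLt.ne,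
          false_and, not_false_eq_true, splitLast_castSucc, splitLast_last, SimpleGraph.sum_adj,
          and_self, ↓reduceIte, Fin.is_le', sup_of_le_right, true_and, true_iff]
        omega
      | cast i' =>
        simp only [splitLast_castSucc, SimpleGraph.sum_adj_inl, ih, ne_eq, Sigma.mk.injEq,
          Fin.ext_iff, Fin.val_castSucc]
        have hpar :
            (if (i : ℕ) = i' then (m + 1 + i) % 2 = 0 else (m + 1 + max (i : ℕ) i') % 2 = 1) ↔
              ¬if (i : ℕ) = i' then (m + i) % 2 = 0 else (m + max (i : ℕ) i') % 2 = 1 := by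
          split_ifs <;> omega
        rw [hpar]
        tauto

variable {α m}

lemma cographC_adj_of_even (hm : m % 2 = 0) (hα : ∀ j, j % 2 = 0 → α j = 1)
    (x y : Σ j : Fin m, Fin (α j)) :
    (cographC α m).Adj x y ↔ x.1 ≠ y.1 ∧ max (x.1 : ℕ) y.1 % 2 = 1 := by
  obtain ⟨i, a⟩ := x
  obtain ⟨i', a'⟩ := y
  rw [cographC_adj]
  by_cases h : i = i'
  · subst h
    have : Subsingleton (Fin (α i)) ∨ (m + i) % 2 = 1 := by
      by_cases hi : (i : ℕ) % 2 = 0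
      · rw [hα i hi]; exact Or.inl inferInstance
      · omega
    rcases this with _ | hi
    · simp [Subsingleton.elim a a']
    · simp [hi]
  · simp only [ne_eq, Sigma.mk.injEq, h, false_and, not_false_eq_true, ↓reduceIte, true_and]
    omega

end CographAdjacency

/-- For even `m`, the sum of `c` over the cells adjacent to cell `j` in `cographC α m`
(see `cographC_adj_of_even`). -/
def nbrSum (m : ℕ) (c : ℕ → ℝ) (j : ℕ) : ℝ :=
  ∑ i ∈ range m, if i ≠ j ∧ max j i % 2 = 1 then c i else 0

section NbrSum

variable {m : ℕ} {c : ℕ → ℝ}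

lemma nbrSum_even (t : ℕ) (h : 2 * t + 1 < m) :
    nbrSum m c (2 * t) = c (2 * t + 1) + nbrSum m c (2 * t + 2) := by
  have hpt : ∀ i, (if i ≠ 2 * t ∧ max (2 * t) i % 2 = 1 then c i else 0) =
      (if i = 2 * t + 1 then c i else 0) +
        if i ≠ 2 * t + 2 ∧ max (2 * t + 2) i % 2 = 1 then c i else 0 := by
    intro i
    split_ifs <;> first | ring1 | omega
  rw [nbrSum, sum_congr rfl fun i _ => hpt i, sum_add_distrib, sum_ite_eq',
    if_pos (mem_range.2 h), nbrSum]

lemma nbrSum_odd (t : ℕ) (h : 2 * t + 1 ≤ m) :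
    nbrSum m c (2 * t + 1) = ∑ i ∈ range (2 * t + 1), c i + nbrSum m c (2 * t + 2) := by
  have hpt : ∀ i, (if i ≠ 2 * t + 1 ∧ max (2 * t + 1) i % 2 = 1 then c i else 0) =
      (if i < 2 * t + 1 then c i else 0) +
        if i ≠ 2 * t + 2 ∧ max (2 * t + 2) i % 2 = 1 then c i else 0 := by
    intro i
    split_ifs <;> first | ring1 | omega
  have hrange : {i ∈ range m | i < 2 * t + 1} = range (2 * t + 1) := by
    ext i
    simp only [mem_filter, mem_range]
    omega
  rw [nbrSum, sum_congr rfl fun i _ => hpt i, sum_add_distrib, ← sum_filter, hrange, nbrSum]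

lemma nbrSum_eq_zero_of_le {j : ℕ} (hj : m ≤ j) (hjeven : j % 2 = 0) : nbrSum m c j = 0 :=
  sum_eq_zero fun i hi => if_neg fun h => by simp at hi; omega

end NbrSum

lemma exists_mulVec_eq_smul_of_isRoot_charpoly {ι : Type*} [Fintype ι] [DecidableEq ι]
    {M : Matrix ι ι ℝ} {lam : ℝ} (h : M.charpoly.IsRoot lam) : ∃ v ≠ 0, M *ᵥ v = lam • v := by
  rw [Polynomial.IsRoot, eval_charpoly, ← exists_mulVec_eq_zero_iff] at h
  obtain ⟨v, hv, hMv⟩ := h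
  refine ⟨v, hv, ?_⟩
  rw [sub_mulVec, scalar_apply, ← smul_one_eq_diagonal, smul_mulVec, one_mulVec,
    sub_eq_zero] at hMv
  exact hMv.symm

section CellSums

variable {α : ℕ → ℕ} {m : ℕ}

def cellSum (v : (Σ j : Fin m, Fin (α j)) → ℝ) (j : ℕ) : ℝ :=
  if h : j < m then ∑ a, v ⟨⟨j, h⟩, a⟩ else 0

lemma adjMat_cographC_mulVec_apply (hm : m % 2 = 0) (hα : ∀ j, j % 2 = 0 → α j = 1)
    (v : (Σ j : Fin m, Fin (α j)) → ℝ) (x : Σ j : Fin m, Fin (α j)) :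
    (adjMat (cographC α m) *ᵥ v) x = nbrSum m (cellSum v) x.1 := by
  simp only [mulVec, dotProduct, adjMat, of_apply, ite_mul, one_mul, zero_mul,
    cographC_adj_of_even hm hα]
  rw [← univ_sigma_univ, sum_sigma, nbrSum, ← Fin.sum_univ_eq_sum_range]
  refine sum_congr rfl fun j _ => ?_
  have hcond : (x.1 ≠ j ∧ max (x.1 : ℕ) j % 2 = 1) ↔
      ((j : ℕ) ≠ x.1 ∧ max (x.1 : ℕ) j % 2 = 1) := by
    rw [ne_comm, Fin.val_ne_iff]
  simp only [hcond]
  split_ifs <;> simp [cellSum]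

lemma mul_cellSum_of_mulVec_eq_smul (hm : m % 2 = 0) (hα : ∀ j, j % 2 = 0 → α j = 1)
    {v : (Σ j : Fin m, Fin (α j)) → ℝ} {lam : ℝ} (hv : adjMat (cographC α m) *ᵥ v = lam • v)
    {j : ℕ} (hj : j < m) :
    lam * cellSum v j = α j * nbrSum m (cellSum v) j := by
  calc lam * cellSum v j = ∑ a : Fin (α j), (adjMat (cographC α m) *ᵥ v) ⟨⟨j, hj⟩, a⟩ := by
        simp [cellSum, hj, hv, mul_sum]
    _ = α j * nbrSum m (cellSum v) j := by simp [adjMat_cographC_mulVec_apply hm hα]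

end CellSums

lemma antitone_abs_of_recurrence {y : ℕ → ℝ} {a b : ℝ} {N : ℕ} (ha : a ≠ 0)
    (hab : 2 * |a| ≤ |b|) (hy : ∀ t, N ≤ t → y t = 0)
    (hrec : ∀ t, t + 2 ≤ N → a * (y t + y (t + 2)) = b * y (t + 1)) :
    Antitone fun t => |y t| := by
  suffices h : ∀ d t, N ≤ t + d → |y (t + 1)| ≤ |y t| from
    antitone_nat_of_succ_le fun t => h N t (by omega)
  intro d
  induction d with
  | zero => intro t ht; simp [hy (t + 1) (by omega)]
  | succ d ih =>
    intro t ht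
    by_cases hN : t + 2 ≤ N
    · have hnext : |y (t + 2)| ≤ |y (t + 1)| := ih (t + 1) (by omega)
      have hmul : |a| * |y (t + 1)| ≤ |a| * |y t| :=
        calc |a| * |y (t + 1)| ≤ |b| * |y (t + 1)| - |a| * |y (t + 2)| := by
              nlinarith [mul_le_mul_of_nonneg_right hab (abs_nonneg (y (t + 1))),
                mul_le_mul_of_nonneg_left hnext (abs_nonneg a)]
          _ = |b * y (t + 1)| - |a * y (t + 2)| := by rw [abs_mul, abs_mul]
          _ ≤ |b * y (t + 1) - a * y (t + 2)| := abs_sub_abs_le_abs_sub _ _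
          _ = |a| * |y t| := by
              rw [← abs_mul]
              congr 1
              linear_combination -hrec t hN
      exact le_of_mul_le_mul_left hmul (abs_pos.2 ha)
    · simp [hy (t + 1) (by omega)]

lemma eq_zero_of_mul_eq_mul_of_abs_le {p q x y : ℝ} (hpq : |p| < |q|) (hyx : |y| ≤ |x|)
    (h : p * y = q * x) : x = 0 := by
  by_contra hx
  have : |q| * |x| ≤ |p| * |x| :=
    calc |q| * |x| = |p| * |y| := by rw [← abs_mul, ← abs_mul, h]
      _ ≤ |p| * |x| := mul_le_mul_of_nonneg_left hyx (abs_nonneg p)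
  exact hpq.not_ge (le_of_mul_le_mul_right this (abs_pos.2 hx))

section Gap

variable {lam d : ℝ}

lemma sq_sub_ne_zero_of_gap (hd : d = 1 ∨ d = 2) (h1 : lam ≠ -1)
    (hgap : 4 * lam ^ 2 + 4 * lam - 1 ≤ 0) : lam ^ 2 - d ≠ 0 := by
  rcases hd with rfl | rfl <;> intro h
  · have : (lam - 1) * (lam + 1) = 0 := by linear_combination h
    rcases mul_eq_zero.1 this with h' | h'
    · nlinarith
    · exact h1 (by linarith)
  · nlinarith [sq_nonneg (2 * lam + 1)]

lemma abs_boundary_coeff_lt (hd : d = 1 ∨ d = 2) (h1 : lam ≠ -1)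
    (hgap : 4 * lam ^ 2 + 4 * lam - 1 ≤ 0) :
    |(lam ^ 2 + lam) * (lam ^ 2 - d)| <
      |(lam ^ 2 + lam - 1) * (lam ^ 2 - d) - (lam ^ 2 + lam) * (lam + d)| := by
  rw [← sq_lt_sq, ← sub_pos]
  rcases hd with rfl | rfl
  · have hf1 : 0 < 1 - 2 * lam - lam ^ 2 := by nlinarith [sq_nonneg (2 * lam + 1)]
    have hf2 : 0 < 2 * lam ^ 3 - lam ^ 2 - 4 * lam + 1 := by
      nlinarith [sq_nonneg (2 * lam + 1), sq_nonneg lam, sq_nonneg (lam + 1), sq_nonneg (lam - 1)]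
    have key : ((lam ^ 2 + lam - 1) * (lam ^ 2 - 1) - (lam ^ 2 + lam) * (lam + 1)) ^ 2 -
        ((lam ^ 2 + lam) * (lam ^ 2 - 1)) ^ 2 =
        (lam + 1) ^ 2 * ((1 - 2 * lam - lam ^ 2) * (2 * lam ^ 3 - lam ^ 2 - 4 * lam + 1)) := by
      ring
    rw [key]
    exact mul_pos (pow_two_pos_of_ne_zero fun h => h1 (by linarith)) (mul_pos hf1 hf2)
  · have hf1 : 0 < -lam ^ 3 - 4 * lam ^ 2 - 2 * lam + 2 := by
      nlinarith [sq_nonneg (2 * lam + 1), sq_nonneg lam, sq_nonneg (lam + 1)]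
    have hf2 : 0 < 2 * lam ^ 4 + lam ^ 3 - 8 * lam ^ 2 - 6 * lam + 2 := by
      nlinarith [sq_nonneg (2 * lam + 1), sq_nonneg lam, sq_nonneg (lam + 1), sq_nonneg (lam - 1),
        sq_nonneg (lam ^ 2 + lam), sq_nonneg (2 * lam ^ 2 + 2 * lam - 1),
        sq_nonneg ((2 * lam + 1) ^ 2 - 2)]
    have key : ((lam ^ 2 + lam - 1) * (lam ^ 2 - 2) - (lam ^ 2 + lam) * (lam + 2)) ^ 2 -
        ((lam ^ 2 + lam) * (lam ^ 2 - 2)) ^ 2 =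
        (-lam ^ 3 - 4 * lam ^ 2 - 2 * lam + 2) *
          (2 * lam ^ 4 + lam ^ 3 - 8 * lam ^ 2 - 6 * lam + 2) := by
      ring
    rw [key]
    exact mul_pos hf1 hf2

end Gap

/-- The eigen-equations summed over the cells of `cographC α (2 * k)`: `c j` is the sum over cell
`j`, `d` the size of cell `1` (all other cells are singletons), and `A t` the sum of `c` over the
odd cells after `2 * t`. -/
structure QuotientEqns (k : ℕ) (lam d : ℝ) (c A : ℕ → ℝ) : Prop where
  even : ∀ t < k, lam * c (2 * t) = A t
  odd_zero : 0 < k → lam * c 1 = d * (c 0 + A 1)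
  odd : ∀ t, 1 ≤ t → t < k →
    lam * c (2 * t + 1) = ∑ i ∈ range (2 * t + 1), c i + A (t + 1)
  step : ∀ t < k, A t = c (2 * t + 1) + A (t + 1)
  tail : ∀ t, k ≤ t → A t = 0

namespace QuotientEqns

variable {k : ℕ} {lam d : ℝ} {c A : ℕ → ℝ}

lemma recurrence (h : QuotientEqns k lam d c A) {t : ℕ} (ht : 1 ≤ t) (htk : t + 2 ≤ k) :
    (lam ^ 2 + lam) * (A t + A (t + 2)) = (2 * (lam ^ 2 + lam) - 1) * A (t + 1) := by
  have e1 := h.odd t ht (by omega)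
  have e2 : lam * c (2 * t + 2 + 1) = ∑ i ∈ range (2 * t + 2 + 1), c i + A (t + 2) :=
    h.odd (t + 1) (by omega) (by omega)
  have e3 : lam * c (2 * t + 2) = A (t + 1) := h.even (t + 1) (by omega)
  have e4 := h.step t (by omega)
  have e5 : A (t + 1) = c (2 * t + 2 + 1) + A (t + 2) := h.step (t + 1) (by omega)
  rw [sum_range_succ, sum_range_succ] at e2
  linear_combination lam * e1 - lam * e2 - e3 - lam ^ 2 * e5 + (lam ^ 2 + lam) * e4

lemma boundary_zero (h : QuotientEqns k lam d c A) (hk : 0 < k) :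
    (lam ^ 2 - d) * A 0 = lam * (lam + d) * A 1 := by
  have e0 : lam * c 0 = A 0 := h.even 0 hk
  have e4 : A 0 = c 1 + A 1 := h.step 0 hk
  linear_combination lam * h.odd_zero hk + d * e0 + lam ^ 2 * e4

lemma boundary_one (h : QuotientEqns k lam d c A) (hk : 2 ≤ k) :
    (lam ^ 2 + lam - 1) * A 1 = (lam ^ 2 + lam) * A 2 + (lam + 1) * A 0 := by
  have e0 : lam * c 0 = A 0 := h.even 0 (by omega)
  have e1 : lam * c 3 = ∑ i ∈ range 3, c i + A 2 := h.odd 1 le_rfl (by omega)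
  have e2 : lam * c 2 = A 1 := h.even 1 (by omega)
  have e4 : A 0 = c 1 + A 1 := h.step 0 (by omega)
  have e5 : A 1 = c 3 + A 2 := h.step 1 (by omega)
  simp only [sum_range_succ, range_zero, sum_empty] at e1
  linear_combination lam * e1 + lam ^ 2 * e5 + e0 - lam * e4 + e2

lemma antitone_abs_tail (h : QuotientEqns k lam d c A) (h0 : lam ≠ 0) (h1 : lam ≠ -1)
    (hgap : 4 * lam ^ 2 + 4 * lam - 1 ≤ 0) : Antitone fun t => |A (t + 1)| := by
  have hq : lam ^ 2 + lam ≠ 0 := by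
    rw [show lam ^ 2 + lam = lam * (lam + 1) by ring]
    exact mul_ne_zero h0 fun h => h1 (by linarith)
  have habs : 2 * |lam ^ 2 + lam| ≤ |2 * (lam ^ 2 + lam) - 1| := by
    rw [abs_of_neg (a := 2 * (lam ^ 2 + lam) - 1) (by linarith)]
    cases abs_cases (lam ^ 2 + lam) <;> linarith
  exact antitone_abs_of_recurrence (N := k - 1) hq habs (fun t ht => h.tail _ (by omega))
    fun t ht => h.recurrence (by omega) (by omega)

lemma tail_one_eq_zero (h : QuotientEqns k lam d c A) (hd : d = 1 ∨ d = 2) (h0 : lam ≠ 0)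
    (h1 : lam ≠ -1) (hgap : 4 * lam ^ 2 + 4 * lam - 1 ≤ 0) : A 1 = 0 := by
  rcases le_or_gt k 1 with hk | hk
  · exact h.tail 1 hk
  · refine eq_zero_of_mul_eq_mul_of_abs_le (abs_boundary_coeff_lt hd h1 hgap)
      (h.antitone_abs_tail h0 h1 hgap (Nat.zero_le 1)) ?_
    linear_combination
      (-(lam ^ 2 - d)) * h.boundary_one hk - (lam + 1) * h.boundary_zero (by omega)

lemma tail_eq_zero (h : QuotientEqns k lam d c A) (hd : d = 1 ∨ d = 2) (h0 : lam ≠ 0)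
    (h1 : lam ≠ -1) (hgap : 4 * lam ^ 2 + 4 * lam - 1 ≤ 0) (t : ℕ) : A t = 0 := by
  have hA1 := h.tail_one_eq_zero hd h0 h1 hgap
  cases t with
  | zero =>
    rcases Nat.eq_zero_or_pos k with hk | hk
    · exact h.tail 0 hk.le
    · have := h.boundary_zero hk
      rw [hA1, mul_zero] at this
      exact (mul_eq_zero.1 this).resolve_left (sq_sub_ne_zero_of_gap hd h1 hgap)
  | succ t =>
    have := h.antitone_abs_tail h0 h1 hgap (Nat.zero_le t)
    simp only [zero_add, hA1, abs_zero] at this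
    exact abs_nonpos_iff.1 this

lemma cell_eq_zero (h : QuotientEqns k lam d c A) (hd : d = 1 ∨ d = 2) (h0 : lam ≠ 0)
    (h1 : lam ≠ -1) (hgap : 4 * lam ^ 2 + 4 * lam - 1 ≤ 0) {j : ℕ} (hj : j < 2 * k) :
    c j = 0 := by
  have hA := h.tail_eq_zero hd h0 h1 hgap
  obtain ⟨t, rfl | rfl⟩ := Nat.even_or_odd' j
  · have := h.even t (by omega)
    rw [hA] at this
    exact (mul_eq_zero.1 this).resolve_left h0
  · linarith [h.step t (by omega), hA t, hA (t + 1)]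

end QuotientEqns

section Antiregular

variable {α : ℕ → ℕ} {k : ℕ}

lemma quotientEqns_cellSum (hα : ∀ j ≠ 1, α j = 1) {v : (Σ j : Fin (2 * k), Fin (α j)) → ℝ}
    {lam : ℝ} (hv : adjMat (cographC α (2 * k)) *ᵥ v = lam • v) :
    QuotientEqns k lam (α 1) (cellSum v) fun t => nbrSum (2 * k) (cellSum v) (2 * t) := by
  have hm : 2 * k % 2 = 0 := by omega
  have hα' : ∀ j, j % 2 = 0 → α j = 1 := fun j hj => hα j (by omega)
  refine ⟨fun t ht => ?_, fun hk => ?_, fun t ht htk => ?_, fun t ht => nbrSum_even t (by omega),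
    fun t ht => nbrSum_eq_zero_of_le (by omega) (by omega)⟩
  · simpa [hα' (2 * t) (by omega)] using
      mul_cellSum_of_mulVec_eq_smul hm hα' hv (j := 2 * t) (by omega)
  · have h := mul_cellSum_of_mulVec_eq_smul hm hα' hv (j := 2 * 0 + 1) (by omega)
    rwa [nbrSum_odd 0 (by omega), sum_range_one] at h
  · have h := mul_cellSum_of_mulVec_eq_smul hm hα' hv (j := 2 * t + 1) (by omega)
    rwa [hα (2 * t + 1) (by omega), Nat.cast_one, one_mul, nbrSum_odd t (by omega)] at h

theorem cographC_charpoly_not_isRoot (hα : ∀ j ≠ 1, α j = 1) (hd : α 1 = 1 ∨ α 1 = 2)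
    {lam : ℝ} (h0 : lam ≠ 0) (h1 : lam ≠ -1) (hgap : 4 * lam ^ 2 + 4 * lam - 1 ≤ 0) :
    ¬(adjMat (cographC α (2 * k))).charpoly.IsRoot lam := by
  intro hroot
  obtain ⟨v, hv0, hv⟩ := exists_mulVec_eq_smul_of_isRoot_charpoly hroot
  have hd' : (α 1 : ℝ) = 1 ∨ (α 1 : ℝ) = 2 := by rcases hd with h | h <;> simp [h]
  have hc : ∀ j < 2 * k, cellSum v j = 0 := fun j =>
    (quotientEqns_cellSum hα hv).cell_eq_zero hd' h0 h1 hgap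
  refine hv0 (funext fun x => ?_)
  have hx := congrFun hv x
  rw [adjMat_cographC_mulVec_apply (by omega) (fun j hj => hα j (by omega)), nbrSum,
    sum_eq_zero fun i hi => by rw [hc i (mem_range.1 hi), ite_self]] at hx
  simpa [h0] using hx.symm

end Antiregular

lemma quadratic_nonpos_iff_mem_Icc (lam : ℝ) :
    4 * lam ^ 2 + 4 * lam - 1 ≤ 0 ↔ lam ∈ Set.Icc ((-1 - √2) / 2) ((-1 + √2) / 2) := by
  have hs : √2 ^ 2 = 2 := Real.sq_sqrt (by norm_num)
  have hs0 := Real.sqrt_nonneg 2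
  rw [Set.mem_Icc]
  constructor
  · intro h
    constructor <;> nlinarith
  · rintro ⟨hlo, hhi⟩
    nlinarith

theorem stmt13_general (n : ℕ) (p : Polynomial ℝ)
    (hpeven : Even n → p = (adjMat (cographC (fun _ => 1) n)).charpoly)
    (hpodd : Odd n → p = (adjMat (cographC (fun i => if i = 1 then 2 else 1) (n - 1))).charpoly) :
    (∀ lam : ℝ, p.IsRoot lam → lam < -1 → lam < (-1 - Real.sqrt 2) / 2) ∧
      (∀ lam : ℝ, p.IsRoot lam → 0 < lam → (-1 + Real.sqrt 2) / 2 < lam) ∧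
      (∀ lam : ℝ, p.IsRoot lam → lam ≠ 0 → lam ≠ -1 →
        lam ∉ Set.Icc ((-1 - Real.sqrt 2) / 2) ((-1 + Real.sqrt 2) / 2)) := by
  have hgap : ∀ lam, p.IsRoot lam → lam ≠ 0 → lam ≠ -1 →
      lam ∉ Set.Icc ((-1 - √2) / 2) ((-1 + √2) / 2) := by
    intro lam hp h0 h1 hmem
    rw [← quadratic_nonpos_iff_mem_Icc] at hmem
    obtain ⟨k, rfl | rfl⟩ := Nat.even_or_odd' n
    · rw [hpeven (even_two_mul k)] at hp
      exact cographC_charpoly_not_isRoot (fun _ _ => rfl) (Or.inl rfl) h0 h1 hmem hp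
    · rw [hpodd (odd_two_mul_add_one k), Nat.add_sub_cancel] at hp
      exact cographC_charpoly_not_isRoot (fun _ hj => if_neg hj) (Or.inr rfl) h0 h1 hmem hp
  have hs : 1 < √2 := by rw [Real.lt_sqrt zero_le_one]; norm_num
  refine ⟨fun lam hp hlt => ?_, fun lam hp hpos => ?_, hgap⟩
  · by_contra! hge
    exact hgap lam hp (by linarith) hlt.ne ⟨hge, by linarith⟩
  · by_contra! hle
    exact hgap lam hp hpos.ne' (by linarith) ⟨by linarith, hle⟩

/-- for the antiregular graph `H_n` on `n ≥ 2` vertices (`H_n = C(1,1,…,1)`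
with `n` ones for `n` even, and `H_n = C(1,2,1,…,1)` with `n - 1` parts for `n` odd),
every eigenvalue `< -1` is `< (-1-√2)/2` and every eigenvalue `> 0` is `> (-1+√2)/2`;
equivalently, `[(-1-√2)/2, (-1+√2)/2]` contains no eigenvalue other than possibly `0`
and `-1`.  Here `p` is the characteristic polynomial of the adjacency matrix `A_n`. -/
theorem stmt13 (n : ℕ) (hn : 2 ≤ n) (p : Polynomial ℝ)
    (hpeven : Even n → p = (adjMat (cographC (fun _ => 1) n)).charpoly)
    (hpodd : Odd n → p = (adjMat (cographC (fun i => if i = 1 then 2 else 1) (n - 1))).charpoly) :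
    (∀ lam : ℝ, p.IsRoot lam → lam < -1 → lam < (-1 - Real.sqrt 2) / 2) ∧
      (∀ lam : ℝ, p.IsRoot lam → 0 < lam → (-1 + Real.sqrt 2) / 2 < lam) ∧
      (∀ lam : ℝ, p.IsRoot lam → lam ≠ 0 → lam ≠ -1 →
        lam ∉ Set.Icc ((-1 - Real.sqrt 2) / 2) ((-1 + Real.sqrt 2) / 2)) :=
  stmt13_general n p hpeven hpodd
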